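/- Let C = (C_0, C_1, ..., C_k) be a tuple of real n×n matrices with C_0 invertible and such that C_0^{-1} C_i is a Z-matrix for every 1 ≤ i ≤ k. If C has the cone cS-W property, then for every q ∈ ℝ^n and every tuple d = (d_1, ..., d_{k-1}) of positive vectors in ℝ^n, the solution set SOL(C, d, q) of EHLCP(C, d, q) is a convex subset of (ℝ^n)^{k+1}. -/

import Mathlib

open Matrix Finset

/-- `R` is a column representative matrix of the tuple `C = (C 0, ..., C k)`:
each column of `R` is the corresponding column of some `C i`. -/
def IsColRep {n k : ℕ} (C : Fin (k+1) → Matrix (Fin n) (Fin n) ℝ)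
    (R : Matrix (Fin n) (Fin n) ℝ) : Prop :=
  ∀ j : Fin n, ∃ i : Fin (k+1), ∀ r : Fin n, R r j = C i r j

/-- The column `W`-property: all column representative matrices have determinants
that are all positive or all negative. -/
def HasColumnW {n k : ℕ} (C : Fin (k+1) → Matrix (Fin n) (Fin n) ℝ) : Prop :=
  (∀ R, IsColRep C R → 0 < R.det) ∨ (∀ R, IsColRep C R → R.det < 0)

/-- The column `W₀`-property: determinants of all column representative matrices are
all nonnegative with at least one positive, or all nonpositive with at least one negative. -/
def HasColumnW0 {n k : ℕ} (C : Fin (k+1) → Matrix (Fin n) (Fin n) ℝ) : Prop :=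
  ((∀ R, IsColRep C R → 0 ≤ R.det) ∧ (∃ R, IsColRep C R ∧ 0 < R.det)) ∨
  ((∀ R, IsColRep C R → R.det ≤ 0) ∧ (∃ R, IsColRep C R ∧ R.det < 0))

/-- The column nondegenerate-`W` (column ND-`W`) property. -/
def HasColumnNDW {n k : ℕ} (C : Fin (k+1) → Matrix (Fin n) (Fin n) ℝ) : Prop :=
  ∀ x : Fin (k+1) → Fin n → ℝ,
    C 0 *ᵥ x 0 = ∑ i : Fin k, C i.succ *ᵥ x i.succ →
    (∀ i j : Fin (k+1), i < j → x i * x j = 0) →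
    ∀ i, x i = 0

/-- The column sufficient-`W` (cS-`W`) property. -/
def HasCSW {n k : ℕ} (C : Fin (k+1) → Matrix (Fin n) (Fin n) ℝ) : Prop :=
  ∀ x : Fin (k+1) → Fin n → ℝ,
    C 0 *ᵥ x 0 = ∑ i : Fin k, C i.succ *ᵥ x i.succ →
    (∀ i : Fin k, x 0 * x i.succ ≤ 0) →
    (∀ i j : Fin k, i < j → 0 ≤ x i.succ * x j.succ) →
    ∀ i : Fin k, x i.castSucc * x i.succ = 0

/-- The cone column sufficient-`W` (cone cS-`W`) property. -/
def HasConeCSW {n k : ℕ} (C : Fin (k+1) → Matrix (Fin n) (Fin n) ℝ) : Prop :=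
  ∀ x : Fin (k+1) → Fin n → ℝ,
    C 0 *ᵥ x 0 = ∑ i : Fin k, C i.succ *ᵥ x i.succ →
    (∀ i : Fin k, 0 ≤ x i.succ) →
    (∀ i : Fin k, x 0 * x i.succ ≤ 0) →
    ∀ i : Fin k, x i.castSucc * x i.succ = 0

/-- `x = (x 0, ..., x k)` solves the extended horizontal linear complementarity
problem EHLCP(C, d, q). -/
def IsSolEHLCP {n k : ℕ} (C : Fin (k+1) → Matrix (Fin n) (Fin n) ℝ)
    (d : Fin (k-1) → Fin n → ℝ) (q : Fin n → ℝ)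
    (x : Fin (k+1) → Fin n → ℝ) : Prop :=
  C 0 *ᵥ x 0 = q + ∑ i : Fin k, C i.succ *ᵥ x i.succ ∧
  x 0 ⊓ x 1 = 0 ∧
  ∀ j : Fin (k-1),
    (d j - x ⟨j.1 + 1, by have := j.2; omega⟩) ⊓ x ⟨j.1 + 2, by have := j.2; omega⟩ = 0

/-!
Let `x, y` be two solutions and `z = x - y`. By complementarity, once a level `m ≥ 1` of a
solution drops strictly below its cap `d (m - 1)` all higher levels vanish, and `x 0 > 0` forces
the same from level `1` on. Hence at each coordinate `z 1, …, z k` share one sign and `z 0` has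
the opposite sign. Write the tail of `z` as `p - p'` with `p, p' ≥ 0` its positive and negative
parts and complete `p` by the level-zero vector `C₀⁻¹ ∑ Cᵢ pᵢ` forced by the equation. Since
`C₀⁻¹ Cᵢ` is a `Z`-matrix, that vector is `≤ z 0 ≤ 0` wherever `p` is nonzero, so the completed
tuple meets the hypotheses of the cone cS-W property and its consecutive levels are
complementary; the same holds for `p'`. Hence `z i * z (i + 1) = 0`, which kills the cross terms
in the complementarity conditions of a convex combination of `x` and `y`.
-/

theorem inf_eq_zero_iff {R : Type*} [Ring R] [LinearOrder R] [IsStrictOrderedRing R] {a b : R} :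
    a ⊓ b = 0 ↔ 0 ≤ a ∧ 0 ≤ b ∧ a * b = 0 := by
  constructor
  · intro h
    refine ⟨h ▸ inf_le_left, h ▸ inf_le_right, ?_⟩
    rcases min_choice a b with hab | hab <;> simp_all
  · rintro ⟨ha, hb, hab⟩
    rcases mul_eq_zero.1 hab with rfl | rfl <;> simp [ha, hb]

theorem smul_add_smul_inf_eq_zero {ι : Type*} {u v u' v' : ι → ℝ} (h : u ⊓ v = 0)
    (h' : u' ⊓ v' = 0) (hcross : (u - u') * (v - v') = 0) {a b : ℝ} (ha : 0 ≤ a) (hb : 0 ≤ b) :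
    (a • u + b • u') ⊓ (a • v + b • v') = 0 := by
  funext r
  obtain ⟨hu, hv, huv⟩ := inf_eq_zero_iff.1 (congrFun h r)
  obtain ⟨hu', hv', huv'⟩ := inf_eq_zero_iff.1 (congrFun h' r)
  have hcross_r : (u r - u' r) * (v r - v' r) = 0 := congrFun hcross r
  simp only [Pi.inf_apply, Pi.add_apply, Pi.smul_apply, smul_eq_mul, Pi.zero_apply]
  refine inf_eq_zero_iff.2 ⟨by positivity, by positivity, ?_⟩
  linear_combination (a ^ 2 + a * b) * huv + (b ^ 2 + a * b) * huv' - a * b * hcross_r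

theorem Matrix.mulVec_apply_nonpos_of_offDiag_nonpos {ι R : Type*} [Fintype ι] [Semiring R]
    [PartialOrder R] [IsOrderedRing R] {A : Matrix ι ι R} (hA : ∀ r s, r ≠ s → A r s ≤ 0)
    {w : ι → R} (hw : 0 ≤ w) {r : ι} (hr : w r = 0) : (A *ᵥ w) r ≤ 0 := by
  refine sum_nonpos fun s _ => ?_
  rcases eq_or_ne r s with rfl | hrs
  · simp [hr]
  · exact mul_nonpos_of_nonpos_of_nonneg (hA r s hrs) (hw s)

section Levels

variable {n k : ℕ} {C : Fin (k+1) → Matrix (Fin n) (Fin n) ℝ} {d : Fin (k-1) → Fin n → ℝ}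
  {q : Fin n → ℝ} {x y : Fin (k+1) → Fin n → ℝ} {r : Fin n}

namespace IsSolEHLCP

theorem nonneg (hx : IsSolEHLCP C d q x) (m : Fin (k+1)) (r : Fin n) : 0 ≤ x m r := by
  obtain ⟨-, h01, hcap⟩ := hx
  rcases m with ⟨_ | _ | j, hm⟩
  · exact (inf_eq_zero_iff.1 (congrFun h01 r)).1
  · have h1 : (1 : Fin (k+1)) = ⟨1, hm⟩ := Fin.ext (by simp; omega)
    exact h1 ▸ (inf_eq_zero_iff.1 (congrFun h01 r)).2.1
  · exact (inf_eq_zero_iff.1 (congrFun (hcap ⟨j, by omega⟩) r)).2.1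

theorem le_cap (hx : IsSolEHLCP C d q x) {m : ℕ} (hm : 1 ≤ m) (hmk : m < k) :
    x ⟨m, by omega⟩ r ≤ d ⟨m - 1, by omega⟩ r := by
  obtain ⟨j, rfl⟩ : ∃ j, m = j + 1 := ⟨m - 1, by omega⟩
  exact sub_nonneg.1 (inf_eq_zero_iff.1 (congrFun (hx.2.2 ⟨j, by omega⟩) r)).1

theorem eq_zero_of_lt_cap (hx : IsSolEHLCP C d q x) {m : ℕ} (hm : 1 ≤ m) (hmk : m < k)
    (h : x ⟨m, by omega⟩ r < d ⟨m - 1, by omega⟩ r) : x ⟨m + 1, by omega⟩ r = 0 := by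
  obtain ⟨j, rfl⟩ : ∃ j, m = j + 1 := ⟨m - 1, by omega⟩
  have hj := (inf_eq_zero_iff.1 (congrFun (hx.2.2 ⟨j, by omega⟩) r)).2.2
  exact (mul_eq_zero.1 hj).resolve_left (sub_ne_zero.2 h.ne')

theorem eq_zero_of_le (hd : ∀ j r, 0 < d j r) (hx : IsSolEHLCP C d q x) {a b : Fin (k+1)}
    (ha : a ≠ 0) (hab : a ≤ b) (h : x a r = 0) : x b r = 0 := by
  have ha' : a.val ≠ 0 := fun h' => ha (Fin.ext h')
  suffices ∀ m, a.val ≤ m → ∀ hm : m < k + 1, x ⟨m, hm⟩ r = 0 from this b hab b.2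
  intro m ham
  induction m, ham using Nat.le_induction with
  | base => exact fun _ => h
  | succ m ham ih =>
    exact fun _ => hx.eq_zero_of_lt_cap (by omega) (by omega)
      ((ih (by omega)).trans_lt (hd ⟨m - 1, by omega⟩ r))

theorem eq_zero_of_lt_of_lt (hd : ∀ j r, 0 < d j r) (hx : IsSolEHLCP C d q x)
    (hy : IsSolEHLCP C d q y) {a b : Fin (k+1)} (ha : a ≠ 0) (hab : a < b)
    (h : x a r < y a r) : x b r = 0 := by
  have ha' : a.val ≠ 0 := fun h' => ha (Fin.ext h')
  have hab' : a.val < b.val := hab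
  have hnext : x ⟨a.val + 1, by omega⟩ r = 0 :=
    hx.eq_zero_of_lt_cap (by omega) (by omega) (h.trans_le (hy.le_cap (by omega) (by omega)))
  exact hx.eq_zero_of_le hd (a := ⟨a.val + 1, by omega⟩)
    (fun h' => by simpa using congrArg Fin.val h') hab' hnext

theorem eq_zero_of_pos_zero (hd : ∀ j r, 0 < d j r) (hx : IsSolEHLCP C d q x)
    (h : 0 < x 0 r) {b : Fin (k+1)} (hb : b ≠ 0) : x b r = 0 := by
  have hb' : b.val ≠ 0 := fun h' => hb (Fin.ext h')
  have h1 : (1 : Fin (k+1)).val = 1 := by simp; omega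
  have hx1 : x 1 r = 0 :=
    (mul_eq_zero.1 (inf_eq_zero_iff.1 (congrFun hx.2.1 r)).2.2).resolve_left h.ne'
  exact hx.eq_zero_of_le hd (fun h' => by have := b.2; simp [Fin.ext_iff] at h'; omega)
    (Fin.le_def.2 (by omega)) hx1

theorem tail_le_or_le (hd : ∀ j r, 0 < d j r) (hx : IsSolEHLCP C d q x)
    (hy : IsSolEHLCP C d q y) (r : Fin n) :
    (∀ i : Fin k, y i.succ r ≤ x i.succ r) ∨ ∀ i : Fin k, x i.succ r ≤ y i.succ r := by
  by_contra! ⟨⟨i, hi⟩, ⟨j, hj⟩⟩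
  rcases lt_trichotomy i j with hij | rfl | hji
  · have := hx.eq_zero_of_lt_of_lt hd hy (Fin.succ_ne_zero i) (Fin.succ_lt_succ_iff.2 hij) hi
    linarith [hy.nonneg j.succ r]
  · exact lt_asymm hi hj
  · have := hy.eq_zero_of_lt_of_lt hd hx (Fin.succ_ne_zero j) (Fin.succ_lt_succ_iff.2 hji) hj
    linarith [hx.nonneg i.succ r]

end IsSolEHLCP

def DominatesAt (x y : Fin (k+1) → Fin n → ℝ) (r : Fin n) : Prop :=
  x 0 r ≤ y 0 r ∧ ∀ i : Fin k, y i.succ r ≤ x i.succ r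

theorem IsSolEHLCP.dominatesAt_or_dominatesAt (hd : ∀ j r, 0 < d j r)
    (hx : IsSolEHLCP C d q x) (hy : IsSolEHLCP C d q y) (r : Fin n) :
    DominatesAt x y r ∨ DominatesAt y x r := by
  wlog htail : ∀ i : Fin k, y i.succ r ≤ x i.succ r generalizing x y
  · exact (this hy hx ((hx.tail_le_or_le hd hy r).resolve_left htail)).symm
  rcases le_or_gt (x 0 r) (y 0 r) with h0 | h0
  · exact .inl ⟨h0, htail⟩
  · have hx0 : 0 < x 0 r := (hy.nonneg 0 r).trans_lt h0
    refine .inr ⟨h0.le, fun i => ?_⟩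
    rw [hx.eq_zero_of_pos_zero hd hx0 (Fin.succ_ne_zero i)]
    exact hy.nonneg i.succ r

end Levels

section Head

variable {n k : ℕ} {C : Fin (k+1) → Matrix (Fin n) (Fin n) ℝ}

noncomputable def headOf (C : Fin (k+1) → Matrix (Fin n) (Fin n) ℝ) (w : Fin k → Fin n → ℝ) :
    Fin n → ℝ :=
  (C 0)⁻¹ *ᵥ ∑ i, C i.succ *ᵥ w i

theorem mulVec_headOf (h0 : IsUnit (C 0)) (w : Fin k → Fin n → ℝ) :
    C 0 *ᵥ headOf C w = ∑ i, C i.succ *ᵥ w i := by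
  rw [headOf, mulVec_mulVec, mul_nonsing_inv _ ((isUnit_iff_isUnit_det _).1 h0), one_mulVec]

theorem headOf_eq (h0 : IsUnit (C 0)) {z : Fin (k+1) → Fin n → ℝ}
    (hz : C 0 *ᵥ z 0 = ∑ i : Fin k, C i.succ *ᵥ z i.succ) :
    headOf C (fun i => z i.succ) = z 0 := by
  rw [headOf, ← hz, mulVec_mulVec, nonsing_inv_mul _ ((isUnit_iff_isUnit_det _).1 h0),
    one_mulVec]

theorem headOf_sub (w w' : Fin k → Fin n → ℝ) :
    headOf C w - headOf C w' = headOf C (w - w') := by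
  simp only [headOf, ← mulVec_sub, ← sum_sub_distrib, Pi.sub_apply]

theorem headOf_apply_nonpos
    (hZ : ∀ i : Fin k, ∀ r s : Fin n, r ≠ s → ((C 0)⁻¹ * C i.succ) r s ≤ 0)
    {w : Fin k → Fin n → ℝ} (hw : ∀ i, 0 ≤ w i) {r : Fin n} (hr : ∀ i, w i r = 0) :
    headOf C w r ≤ 0 := by
  rw [headOf, mulVec_sum, Finset.sum_apply]
  refine sum_nonpos fun i _ => ?_
  rw [mulVec_mulVec]
  exact mulVec_apply_nonpos_of_offDiag_nonpos (hZ i) (hw i) (hr i)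

theorem HasConeCSW.cons_headOf_mul_eq_zero (h : HasConeCSW C) (h0 : IsUnit (C 0))
    {w : Fin k → Fin n → ℝ} (hw : ∀ i, 0 ≤ w i) (hsign : ∀ i, headOf C w * w i ≤ 0)
    (i : Fin k) : (Fin.cons (headOf C w) w : Fin (k+1) → Fin n → ℝ) i.castSucc * w i = 0 := by
  simpa using h (Fin.cons (headOf C w) w) (by simpa using mulVec_headOf h0 w) (by simpa)
    (by simpa) i

end Head

section Difference

variable {n k : ℕ} {C : Fin (k+1) → Matrix (Fin n) (Fin n) ℝ} {d : Fin (k-1) → Fin n → ℝ}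
  {q : Fin n → ℝ} {x y : Fin (k+1) → Fin n → ℝ}

theorem IsSolEHLCP.mulVec_sub (hx : IsSolEHLCP C d q x) (hy : IsSolEHLCP C d q y) :
    C 0 *ᵥ (x - y) 0 = ∑ i : Fin k, C i.succ *ᵥ (x - y) i.succ := by
  simp only [Pi.sub_apply, Matrix.mulVec_sub, sum_sub_distrib, hx.1, hy.1]
  abel

theorem headOf_posPart_le (h0 : IsUnit (C 0))
    (hZ : ∀ i : Fin k, ∀ r s : Fin n, r ≠ s → ((C 0)⁻¹ * C i.succ) r s ≤ 0)
    (hx : IsSolEHLCP C d q x) (hy : IsSolEHLCP C d q y) {r : Fin n} (hr : DominatesAt x y r) :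
    headOf C (fun i => (x i.succ - y i.succ)⁺) r ≤ x 0 r - y 0 r := by
  have hsplit : headOf C (fun i => (x i.succ - y i.succ)⁺)
      - headOf C (fun i => (y i.succ - x i.succ)⁺) = x 0 - y 0 := by
    rw [headOf_sub, ← Pi.sub_apply x y, ← headOf_eq h0 (hx.mulVec_sub hy)]
    congr 1
    funext i
    have := posPart_sub_negPart (x i.succ - y i.succ)
    rwa [← posPart_neg, neg_sub] at this
  have hneg : headOf C (fun i => (y i.succ - x i.succ)⁺) r ≤ 0 :=
    headOf_apply_nonpos hZ (fun i => posPart_nonneg _) fun i => by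
      simp [Pi.posPart_apply, posPart_eq_zero.2 (sub_nonpos.2 (hr.2 i))]
  have hsplit_r := congrFun hsplit r
  simp only [Pi.sub_apply] at hsplit_r
  linarith

theorem headOf_posPart_mul_nonpos (hd : ∀ j r, 0 < d j r) (h0 : IsUnit (C 0))
    (hZ : ∀ i : Fin k, ∀ r s : Fin n, r ≠ s → ((C 0)⁻¹ * C i.succ) r s ≤ 0)
    (hx : IsSolEHLCP C d q x) (hy : IsSolEHLCP C d q y) (i : Fin k) :
    headOf C (fun i => (x i.succ - y i.succ)⁺) * (x i.succ - y i.succ)⁺ ≤ 0 := fun r => by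
  rcases hx.dominatesAt_or_dominatesAt hd hy r with hr | hr
  · exact mul_nonpos_of_nonpos_of_nonneg
      ((headOf_posPart_le h0 hZ hx hy hr).trans (sub_nonpos.2 hr.1)) (posPart_nonneg _)
  · simp [Pi.posPart_apply, posPart_eq_zero.2 (sub_nonpos.2 (hr.2 i))]

theorem IsSolEHLCP.sub_mul_sub_eq_zero (hd : ∀ j r, 0 < d j r) (h0 : IsUnit (C 0))
    (hZ : ∀ i : Fin k, ∀ r s : Fin n, r ≠ s → ((C 0)⁻¹ * C i.succ) r s ≤ 0)
    (h : HasConeCSW C) (hx : IsSolEHLCP C d q x) (hy : IsSolEHLCP C d q y) (i : Fin k) :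
    (x i.castSucc - y i.castSucc) * (x i.succ - y i.succ) = 0 := by
  funext r
  wlog hr : DominatesAt x y r generalizing x y
  · have := this hy hx ((hx.dominatesAt_or_dominatesAt hd hy r).resolve_left hr)
    simp only [Pi.mul_apply, Pi.sub_apply, Pi.zero_apply] at this ⊢
    linear_combination this
  have hp : ∀ j : Fin k, x j.succ r - y j.succ r = (x j.succ - y j.succ)⁺ r := fun j => by
    rw [Pi.posPart_apply, Pi.sub_apply, posPart_eq_self.2 (sub_nonneg.2 (hr.2 j))]
  have hchain := congrFun (h.cons_headOf_mul_eq_zero h0 (fun j => posPart_nonneg _)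
    (headOf_posPart_mul_nonpos hd h0 hZ hx hy) i) r
  simp only [Pi.mul_apply, Pi.sub_apply, Pi.zero_apply, ← hp] at hchain ⊢
  rcases Fin.eq_zero_or_eq_succ i.castSucc with hi | ⟨j, hj⟩
  · rw [hi, Fin.cons_zero] at hchain
    rw [hi]
    rcases mul_eq_zero.1 hchain with hu | hzi
    · rw [show x 0 r - y 0 r = 0 by linarith [hr.1, headOf_posPart_le h0 hZ hx hy hr], zero_mul]
    · rw [hzi, mul_zero]
  · rw [hj, Fin.cons_succ, ← hp] at hchain
    rwa [hj]

end Difference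

/-- if `C_0` is invertible, every `C_0⁻¹ C_i` (`1 ≤ i ≤ k`) is a
`Z`-matrix, and `C` has the cone cS-`W` property, then the solution set of
EHLCP(C, d, q) is convex for every `q` and every tuple of positive vectors `d`. -/
theorem coneCSW_implies_convex_solution_set {n k : ℕ} (hk : 0 < k)
    (C : Fin (k+1) → Matrix (Fin n) (Fin n) ℝ) (h0 : IsUnit (C 0))
    (hZ : ∀ i : Fin k, ∀ r s : Fin n, r ≠ s → ((C 0)⁻¹ * C i.succ) r s ≤ 0)
    (h : HasConeCSW C) :
    ∀ (q : Fin n → ℝ) (d : Fin (k-1) → Fin n → ℝ), (∀ j, ∀ r, 0 < d j r) →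
      Convex ℝ {x : Fin (k+1) → Fin n → ℝ | IsSolEHLCP C d q x} := by
  intro q d hd x hx y hy a b ha hb hab
  have hcross := hx.sub_mul_sub_eq_zero hd h0 hZ h hy
  have : NeZero k := ⟨hk.ne'⟩
  refine ⟨?_, ?_, fun j => ?_⟩
  · simp only [Pi.add_apply, Pi.smul_apply, mulVec_add, mulVec_smul, hx.1, hy.1,
      sum_add_distrib, ← smul_sum]
    linear_combination (norm := module) hab • q
  · simpa using smul_add_smul_inf_eq_zero hx.2.1 hy.2.1 (by simpa using hcross 0) ha hb
  · have hcap : ∀ m, d j - (a • x + b • y) m = a • (d j - x m) + b • (d j - y m) := fun m => by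
      simp only [Pi.add_apply, Pi.smul_apply]
      linear_combination (norm := module) -hab • d j
    rw [hcap]
    refine smul_add_smul_inf_eq_zero (hx.2.2 j) (hy.2.2 j) ?_ ha hb
    rw [sub_sub_sub_cancel_left, ← neg_sub, neg_mul, neg_eq_zero]
    exact hcross ⟨j + 1, by omega⟩
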